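/- For any positive integer j and any graph G, α_j(G) ≤ a_j′(G), i.e., the j-independence number is at most the maximum integer k for which the sum of the k smallest degrees minus k(j−1)/2 is at most m(G). -/

import Mathlib

open Finset

namespace DSI

variable {V : Type*} (G : SimpleGraph V) [Fintype V] [DecidableEq V] [DecidableRel G.Adj]

/-- The degree sequence of `G`, sorted in non-decreasing order. -/
def dseq : List ℕ := (Finset.univ.val.map (fun v => G.degree v)).sort (· ≤ ·)

/-- The sum of the `k` smallest degrees, `Σ_{i=1}^k d_i`. -/
def sumSmallest (k : ℕ) : ℕ := ((dseq G).take k).sum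

/-- The sum of the `k` largest degrees, `Σ_{i=1}^k d_{n-i+1}`. -/
def sumLargest (k : ℕ) : ℕ := ((dseq G).reverse.take k).sum

/-- The number of edges `m(G)`. -/
def esize : ℕ := G.edgeFinset.card

/-- `m[S]`: the number of edges of the subgraph induced by `S`. -/
def mOn (S : Finset V) : ℕ := (S.sym2.filter (fun e => e ∈ G.edgeSet)).card

/-- A set `I` is `j`-independent if every vertex of `I` has fewer than `j` neighbours in `I`,
i.e. the induced subgraph has maximum degree `< j`. -/
def JIndep (j : ℕ) (I : Finset V) : Prop := ∀ v ∈ I, (I.filter (G.Adj v)).card < j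

/-- The `j`-independence number `α_j(G)`. -/
noncomputable def alphaJ (j : ℕ) : ℕ := sSup {k | ∃ I : Finset V, JIndep G j I ∧ I.card = k}

/-- The family `F` of maximum `j`-independent sets. -/
noncomputable def maxJIndep (j : ℕ) : Set (Finset V) :=
  {S | JIndep G j S ∧ S.card = alphaJ G j}

/-- `max_{S ∈ F} (m[V−S] − m[S])`. -/
noncomputable def fU (j : ℕ) : ℤ :=
  sSup ((fun S : Finset V => (mOn G Sᶜ : ℤ) - (mOn G S : ℤ)) '' maxJIndep G j)

/-- `min_{S ∈ F} (m[V−S] − m[S])`. -/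
noncomputable def fL (j : ℕ) : ℤ :=
  sInf ((fun S : Finset V => (mOn G Sᶜ : ℤ) - (mOn G S : ℤ)) '' maxJIndep G j)

/-- The upper `j`-annihilation number `a_j(G)`. -/
noncomputable def aJ (j : ℕ) : ℕ :=
  sSup {k | k ≤ Fintype.card V ∧ (sumSmallest G k : ℤ) + fU G j ≤ (esize G : ℤ)}

/-- The lower `j`-annihilation number `c_j(G)`. -/
noncomputable def cJ (j : ℕ) : ℕ :=
  sInf {k | k ≤ Fintype.card V ∧ (esize G : ℤ) ≤ (sumLargest G k : ℤ) + fL G j}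

/-- The annihilation number `a(G)`. -/
noncomputable def annihilation : ℕ :=
  sSup {k | k ≤ Fintype.card V ∧ sumSmallest G k ≤ esize G}

/-- An independent set. -/
def IndepSet (I : Finset V) : Prop := ∀ v ∈ I, ∀ w ∈ I, ¬ G.Adj v w

/-- The independence number `α(G)`. -/
noncomputable def alpha : ℕ := sSup {k | ∃ I : Finset V, IndepSet G I ∧ I.card = k}

end DSI
/-- The weak upper `j`-annihilation number
`a_j′(G) = max { k | Σ_{i=1}^k d_i - k(j-1)/2 ≤ m(G) }`. -/
noncomputable def DSI.aJweak {V : Type*} (G : SimpleGraph V) [Fintype V]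
    [DecidableEq V] [DecidableRel G.Adj] (j : ℕ) : ℕ :=
  sSup {k | k ≤ Fintype.card V ∧
    (DSI.sumSmallest G k : ℚ) - (k : ℚ) * ((j : ℚ) - 1) / 2 ≤ (DSI.esize G : ℚ)}

/-! If `I` is `j`-independent with `k` vertices, its degree sum counts at most `k (j - 1)` ends of
edges inside `I`, plus the edges leaving `I`; the latter number at most the degree sum of `V ∖ I`,
which is `2 m(G)` minus that of `I`. Hence `2 Σ_{v ∈ I} deg v ≤ k (j - 1) + 2 m(G)`, and the degree
sum of `I` dominates the sum of the `k` smallest degrees. -/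

theorem List.sum_take_length_le_sum_of_sublist {α : Type*} [AddCommMonoid α] [PartialOrder α]
    [IsOrderedAddMonoid α] {l₁ l₂ : List α} (h : l₁.Sublist l₂) (hl₂ : l₂.Pairwise (· ≤ ·)) :
    (l₂.take l₁.length).sum ≤ l₁.sum := by
  induction h with
  | slnil => simp
  | @cons l₁ l₂ a h ih =>
    obtain ⟨ha, hl₂⟩ := List.pairwise_cons.mp hl₂
    cases l₁ with
    | nil => simp
    | cons b l₁ =>
      have hlen : l₁.length < l₂.length := h.length_le
      have ih := ih hl₂
      rw [List.length_cons, List.sum_take_succ _ _ hlen] at ih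
      calc a + (l₂.take l₁.length).sum
          ≤ (l₂.take l₁.length).sum + l₂[l₁.length] := by
            rw [add_comm]; gcongr; exact ha _ (List.getElem_mem _)
        _ ≤ (b :: l₁).sum := ih
  | cons_cons a h ih =>
    simpa using add_le_add_right (ih (List.pairwise_cons.mp hl₂).2) a

theorem Multiset.sum_take_card_sort_le_sum_of_le {α : Type*} [AddCommMonoid α] [LinearOrder α]
    [IsOrderedAddMonoid α] {s t : Multiset α} (h : t ≤ s) :
    ((s.sort (· ≤ ·)).take (Multiset.card t)).sum ≤ t.sum := by
  have hsub : (t.sort (· ≤ ·)).Sublist (s.sort (· ≤ ·)) :=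
    List.sublist_of_subperm_of_pairwise (by rwa [← Multiset.coe_le, Multiset.sort_eq,
      Multiset.sort_eq]) (Multiset.pairwise_sort _ _) (Multiset.pairwise_sort _ _)
  simpa [← Multiset.sum_coe, Multiset.sort_eq] using
    List.sum_take_length_le_sum_of_sublist hsub (Multiset.pairwise_sort _ _)

namespace DSI

variable {V : Type*} (G : SimpleGraph V) [DecidableRel G.Adj]

variable {G} in
theorem JIndep.sum_card_filter_adj_le {j : ℕ} {I : Finset V} (hI : JIndep G j I) :
    (∑ v ∈ I, #(I.filter (G.Adj v)) : ℚ) ≤ #I * ((j : ℚ) - 1) := by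
  rw [← nsmul_eq_mul]
  refine sum_le_card_nsmul _ _ _ fun v hv => ?_
  have : #(I.filter (G.Adj v)) + 1 ≤ j := hI v hv
  rw [le_sub_iff_add_le]
  exact_mod_cast this

variable [Fintype V]

theorem sumSmallest_card_le_sum_degree (I : Finset V) :
    sumSmallest G #I ≤ ∑ v ∈ I, G.degree v := by
  have hle : I.val.map (fun v => G.degree v) ≤ univ.val.map (fun v => G.degree v) :=
    Multiset.map_le_map (val_le_iff.mpr (subset_univ I))
  have := Multiset.sum_take_card_sort_le_sum_of_le hle
  rw [Multiset.card_map] at this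
  exact this

theorem degree_eq_card_filter_adj_add_card_filter_adj_compl [DecidableEq V] (I : Finset V)
    (v : V) : G.degree v = #(I.filter (G.Adj v)) + #(Iᶜ.filter (G.Adj v)) := by
  rw [← G.card_neighborFinset_eq_degree, SimpleGraph.neighborFinset_eq_filter,
    ← card_union_of_disjoint (disjoint_filter_filter disjoint_compl_right), ← filter_union,
    union_compl]

theorem sum_card_filter_adj_compl_le_sum_degree_compl [DecidableEq V] (I : Finset V) :
    ∑ v ∈ I, #(Iᶜ.filter (G.Adj v)) ≤ ∑ w ∈ Iᶜ, G.degree w := by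
  calc ∑ v ∈ I, #(Iᶜ.filter (G.Adj v))
      = ∑ w ∈ Iᶜ, #(I.filter (G.Adj · w)) := sum_card_bipartiteAbove_eq_sum_card_bipartiteBelow _
    _ ≤ ∑ w ∈ Iᶜ, G.degree w := by
      refine sum_le_sum fun w _ => ?_
      rw [← G.card_neighborFinset_eq_degree, SimpleGraph.neighborFinset_eq_filter]
      exact card_le_card fun v hv => by simpa [G.adj_comm] using (mem_filter.mp hv).2

theorem exists_jIndep_card_eq_alphaJ (j : ℕ) : ∃ I : Finset V, JIndep G j I ∧ #I = alphaJ G j :=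
  Nat.sSup_mem (s := {k | ∃ I : Finset V, JIndep G j I ∧ #I = k})
    ⟨0, ∅, fun v hv => absurd hv (notMem_empty v), card_empty⟩
    ⟨Fintype.card V, by rintro k ⟨I, -, rfl⟩; exact card_le_univ I⟩

variable {G}

theorem JIndep.two_mul_sum_degree_le [DecidableEq V] {j : ℕ} {I : Finset V} (hI : JIndep G j I) :
    (2 * ∑ v ∈ I, G.degree v : ℚ) ≤ #I * ((j : ℚ) - 1) + 2 * esize G := by
  have hsplit := congrArg (Nat.cast (R := ℚ)) (sum_congr rfl fun v (_ : v ∈ I) =>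
    degree_eq_card_filter_adj_add_card_filter_adj_compl G I v)
  have hcut : (∑ v ∈ I, #(Iᶜ.filter (G.Adj v)) : ℚ) ≤ ∑ w ∈ Iᶜ, G.degree w := by
    exact_mod_cast sum_card_filter_adj_compl_le_sum_degree_compl G I
  have hhandshake : (∑ v ∈ I, G.degree v + ∑ w ∈ Iᶜ, G.degree w : ℚ) = 2 * esize G := by
    exact_mod_cast (sum_add_sum_compl I _).trans G.sum_degrees_eq_twice_card_edges
  push_cast [sum_add_distrib] at hsplit hcut hhandshake ⊢
  linarith [hI.sum_card_filter_adj_le]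

theorem JIndep.card_le_aJweak [DecidableEq V] {j : ℕ} {I : Finset V} (hI : JIndep G j I) :
    #I ≤ aJweak G j := by
  refine le_csSup ⟨Fintype.card V, fun k hk => hk.1⟩ ⟨card_le_univ I, ?_⟩
  have : (sumSmallest G #I : ℚ) ≤ ∑ v ∈ I, G.degree v := by
    exact_mod_cast sumSmallest_card_le_sum_degree G I
  linarith [hI.two_mul_sum_degree_le]

end DSI

theorem alphaJ_le_aJweak_general {V : Type*} (G : SimpleGraph V) [Fintype V]
    [DecidableEq V] [DecidableRel G.Adj] (j : ℕ) :
    DSI.alphaJ G j ≤ DSI.aJweak G j := by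
  obtain ⟨I, hI, hcard⟩ := DSI.exists_jIndep_card_eq_alphaJ G j
  exact hcard ▸ hI.card_le_aJweak

theorem alphaJ_le_aJweak {V : Type*} (G : SimpleGraph V) [Fintype V]
    [DecidableEq V] [DecidableRel G.Adj] (j : ℕ) (hj : 1 ≤ j) :
    DSI.alphaJ G j ≤ DSI.aJweak G j :=
  alphaJ_le_aJweak_general G j
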